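/- arXiv:1712.03681 — 4 statements merged into one kernel-verified Lean document; each statement's English description precedes it below -/
import Mathlib

section
/- Let P(x) = x^3 - b x^2 + c x - d with b > 1, c > 0, d ∈ (0,1), 1 - d < b - c, bc - d > 0, and suppose b > c. Then P has exactly one real root in the open interval (1, b). -/
theorem stmt_4 (b c d : ℝ) (hb : 1 < b) (hc : 0 < c) (hd0 : 0 < d) (hd1 : d < 1)
    (h1 : 1 - d < b - c) (hbcd : 0 < b * c - d) (hbc : c < b) :
    ∃! x : ℝ, x ∈ Set.Ioo 1 b ∧ x ^ 3 - b * x ^ 2 + c * x - d = 0 := by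
  have hcont : ContinuousOn (fun x : ℝ => x ^ 3 - b * x ^ 2 + c * x - d) (Set.Icc 1 b) := by
    fun_prop
  have hf1 : (1:ℝ) ^ 3 - b * 1 ^ 2 + c * 1 - d < 0 := by nlinarith
  have hfb : (0:ℝ) < b ^ 3 - b * b ^ 2 + c * b - d := by nlinarith
  obtain ⟨x, hx, hfx⟩ := intermediate_value_Ioo hb.le hcont ⟨hf1, hfb⟩
  refine ⟨x, ⟨hx, hfx⟩, ?_⟩
  rintro y ⟨hy, hfy⟩
  by_contra hne
  have hsub : (y - x) * (y ^ 2 + y * x + x ^ 2 - b * (y + x) + c) = 0 := by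
    linear_combination hfy - hfx
  have hq : y ^ 2 + y * x + x ^ 2 - b * (y + x) + c = 0 := by
    rcases mul_eq_zero.mp hsub with h | h
    · exact absurd (by linarith [sub_eq_zero.mp h]) hne
    · exact h
  set z : ℝ := b - x - y with hz
  have hd : d = x * y * z := by
    have : d = x * y * (b - x - y) := by linear_combination -hfx + x * hq
    rw [hz]; exact this
  obtain ⟨hx1, hxb⟩ := hy
  obtain ⟨hy1, hyb⟩ := hx
  have hxy1 : 1 < x * y := by nlinarith
  have hz0 : 0 < z := by nlinarith
  have hz1 : z < 1 := by nlinarith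
  have heq : (x - 1) * (y - 1) * (1 - z) = 1 - b + c - d := by
    rw [hz, hd, hz]; linear_combination -hq
  nlinarith [mul_pos (mul_pos (sub_pos.2 hy1) (sub_pos.2 hx1)) (sub_pos.2 hz1)]
end

section
/- For real parameters k > 0, σ > 0, η > 0, β ∈ (0,1), the cubic P(x) = x^3 - b x^2 + c x - d with b = (ση + k(1+η))/(1+ση) + 1 + β, c = (1+β)·ση/(1+ση) + kη/(1+ση) + β, d = βση/(1+ση) satisfies b > 1, c > 0, 0 < d < 1, 1 - d < b - c, b > c, and bc - d > 0. Consequently P has exactly one root (counting with multiplicity over ℂ) outside the closed unit disk, and the other two roots have modulus less than 1. -/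
/-!
`P(1) = -k / (1 + σ η) < 0` and `P → ∞`, so `P` has a real root `r > 1`. Dividing it off
leaves `z² - (b - r) z + d / r`, which is positive at `±1` (its values there are
`P(±1) / (±1 - r)`) and has constant term `d / r < 1`; by the Schur–Cohn conditions both of
its roots lie in the open unit disk.
-/

open Polynomial Filter

theorem Polynomial.exists_isRoot_gt_of_eval_neg {p : ℝ[X]} (hdeg : 0 < p.degree)
    (hlead : 0 < p.leadingCoeff) {a : ℝ} (ha : p.eval a < 0) : ∃ r, a < r ∧ p.IsRoot r := by
  obtain ⟨M, hM, haM⟩ :=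
    ((p.tendsto_atTop_of_leadingCoeff_nonneg hdeg hlead.le).eventually_gt_atTop 0).and
      (eventually_ge_atTop a) |>.exists
  obtain ⟨r, hr, hroot⟩ := intermediate_value_Ioo haM p.continuousOn ⟨ha, hM⟩
  exact ⟨r, hr.1, hroot⟩

theorem exists_cubic_root_gt {a b c d : ℝ} (ha : a ^ 3 - b * a ^ 2 + c * a - d < 0) :
    ∃ r, a < r ∧ r ^ 3 - b * r ^ 2 + c * r - d = 0 := by
  have hdeg : (X ^ 3 - C b * X ^ 2 + C c * X - C d : ℝ[X]).degree = 3 := by compute_degree!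
  have hmonic : (X ^ 3 - C b * X ^ 2 + C c * X - C d : ℝ[X]).Monic := by monicity!
  obtain ⟨r, hr, hroot⟩ := exists_isRoot_gt_of_eval_neg (by rw [hdeg]; norm_num)
    (by rw [hmonic.leadingCoeff]; norm_num) (by simpa using ha)
  exact ⟨r, hr, by simpa using hroot⟩

theorem Polynomial.roots_cubic_eq_of_vieta {R : Type*} [CommRing R] [IsDomain R]
    {u v w b c d : R} (hb : u + v + w = b) (hc : u * v + u * w + v * w = c)
    (hd : u * v * w = d) :
    (X ^ 3 - C b * X ^ 2 + C c * X - C d).roots = {u, v, w} := by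
  have hfactor : X ^ 3 - C b * X ^ 2 + C c * X - C d =
      (({u, v, w} : Multiset R).map fun a => X - C a).prod := by
    subst hb hc hd
    simp only [Multiset.insert_eq_cons, Multiset.map_cons, Multiset.map_singleton,
      Multiset.prod_cons, Multiset.prod_singleton, map_add, map_mul]
    ring
  rw [hfactor, roots_multiset_prod_X_sub_C]

/-- `z₁, z₂` are the roots of `z² - e z + w`; the hypotheses are its Schur–Cohn
conditions. -/
theorem Complex.norm_lt_one_of_add_of_mul {z₁ z₂ : ℂ} {e w : ℝ} (hs : z₁ + z₂ = e)
    (hm : z₁ * z₂ = w) (hw : w < 1) (h₁ : 0 < 1 - e + w) (h₂ : 0 < 1 + e + w) :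
    ‖z₁‖ < 1 := by
  obtain rfl : z₂ = e - z₁ := by linear_combination hs
  have hre : z₁.re * (e - z₁.re) + z₁.im ^ 2 = w := by
    simpa [Complex.mul_re, sq] using congrArg Complex.re hm
  have him : z₁.im * (e - 2 * z₁.re) = 0 := by
    have := congrArg Complex.im hm
    simp only [Complex.mul_im, Complex.sub_re, Complex.sub_im, Complex.ofReal_re,
      Complex.ofReal_im] at this
    linear_combination this
  suffices z₁.re ^ 2 + z₁.im ^ 2 < 1 by
    rw [← sq_lt_one_iff₀ (norm_nonneg _), Complex.sq_norm, Complex.normSq_apply]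
    linarith
  rcases mul_eq_zero.mp him with hreal | hconj
  · rw [hreal] at hre ⊢
    set x := z₁.re
    have hpos₁ : 0 < (1 - x) * (1 - (e - x)) := by linarith
    have hpos₂ : 0 < (1 + x) * (1 + (e - x)) := by linarith
    have hlt : x < 1 := by
      by_contra! hx
      nlinarith
    have hgt : -1 < x := by
      by_contra! hx
      nlinarith
    nlinarith
  · nlinarith

theorem countP_roots_cubic_of_eval_neg {b c d : ℝ} (hP₁ : 1 - b + c - d < 0)
    (hPneg₁ : -1 - b - c - d < 0) (hd : d < 1) :
    Multiset.countP (fun z : ℂ => 1 < ‖z‖)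
      ((X ^ 3 - C (b : ℂ) * X ^ 2 + C (c : ℂ) * X - C (d : ℂ)).roots) = 1 ∧
    Multiset.countP (fun z : ℂ => ‖z‖ < 1)
      ((X ^ 3 - C (b : ℂ) * X ^ 2 + C (c : ℂ) * X - C (d : ℂ)).roots) = 2 := by
  obtain ⟨r, hr, hroot⟩ :=
    exists_cubic_root_gt (show (1 : ℝ) ^ 3 - b * 1 ^ 2 + c * 1 - d < 0 by linarith)
  have hr₀ : 0 < r := by linarith
  -- Splitting off the real root `r > 1` leaves `X² - e X + w`, whose values at `±1` are
  -- `P(±1) / (±1 - r) > 0`.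
  set e := b - r
  set w := d / r
  have hrw : r * w = d := by simp only [w]; field_simp
  have hc : c = r * e + w := by
    simp only [e, w]
    field_simp
    linear_combination hroot
  obtain ⟨z, hz⟩ : ∃ z : ℂ, 1 * (z * z) + (-e) * z + w = 0 :=
    exists_quadratic_eq_zero one_ne_zero (IsAlgClosed.exists_eq_mul_self _)
  have hroots : (X ^ 3 - C (b : ℂ) * X ^ 2 + C (c : ℂ) * X - C (d : ℂ)).roots =
      {(r : ℂ), z, e - z} := by
    refine roots_cubic_eq_of_vieta ?_ ?_ ?_
    · simp only [e]; push_cast; ring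
    · rw [hc]; push_cast; linear_combination -hz
    · rw [← hrw]; push_cast; linear_combination -(r : ℂ) * hz
  have hw : w < 1 := (div_lt_one hr₀).mpr (by linarith)
  have hq₁ : 0 < 1 - e + w :=
    pos_of_mul_neg_right (a := 1 - r) (by linear_combination hP₁ - hc - hrw) (by linarith)
  have hqneg₁ : 0 < 1 + e + w :=
    pos_of_mul_neg_right (a := -1 - r) (by linear_combination hPneg₁ + hc - hrw) (by linarith)
  have hsum : z + (e - z) = e := by ring
  have hprod : z * (e - z) = w := by linear_combination -hz
  have hz₁ := Complex.norm_lt_one_of_add_of_mul hsum hprod hw hq₁ hqneg₁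
  have hz₂ := Complex.norm_lt_one_of_add_of_mul ((add_comm _ _).trans hsum)
    ((mul_comm _ _).trans hprod) hw hq₁ hqneg₁
  have hr' : 1 < |r| := by rwa [abs_of_pos hr₀]
  rw [hroots]
  simp [← Multiset.cons_zero, hz₁, hz₂, hr', hz₁.le.not_gt, hz₂.le.not_gt, hr'.le.not_gt]

open Polynomial in
open scoped Classical in
theorem stmt_7 (k σ η β : ℝ) (hk : 0 < k) (hσ : 0 < σ) (hη : 0 < η)
    (hβ0 : 0 < β) (hβ1 : β < 1)
    (b c d : ℝ)
    (hb : b = (σ * η + k * (1 + η)) / (1 + σ * η) + 1 + β)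
    (hc : c = (1 + β) * (σ * η) / (1 + σ * η) + k * η / (1 + σ * η) + β)
    (hd : d = β * σ * η / (1 + σ * η)) :
    1 < b ∧ 0 < c ∧ 0 < d ∧ d < 1 ∧ 1 - d < b - c ∧ c < b ∧ 0 < b * c - d ∧
    Multiset.countP (fun z => 1 < ‖z‖)
      ((X ^ 3 - C (b : ℂ) * X ^ 2 + C (c : ℂ) * X - C (d : ℂ)).roots) = 1 ∧
    Multiset.countP (fun z => ‖z‖ < 1)
      ((X ^ 3 - C (b : ℂ) * X ^ 2 + C (c : ℂ) * X - C (d : ℂ)).roots) = 2 := by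
  have ht : 0 < 1 + σ * η := by positivity
  have hb₁ : 1 < b := by
    have : 0 < (σ * η + k * (1 + η)) / (1 + σ * η) := by positivity
    linarith
  have hd₀ : 0 < d := by rw [hd]; positivity
  have hd₁ : d < 1 := by
    rw [hd, div_lt_one ht]
    nlinarith [mul_pos hσ hη]
  have hcd : c - d = (σ * η + k * η) / (1 + σ * η) + β := by
    rw [hc, hd]; field_simp; ring
  have hgap : b - c - (1 - d) = k / (1 + σ * η) := by
    rw [hb, hc, hd]; field_simp; ring
  have hdc : d < c := by
    have : 0 < (σ * η + k * η) / (1 + σ * η) := by positivity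
    linarith
  have hc₀ : 0 < c := hd₀.trans hdc
  have hgap₀ : 1 - d < b - c := by
    have : 0 < k / (1 + σ * η) := by positivity
    linarith
  have hcb : c < b := by linarith
  have hbcd : 0 < b * c - d := by nlinarith [mul_pos (sub_pos.2 hb₁) hc₀]
  exact ⟨hb₁, hc₀, hd₀, hd₁, hgap₀, hcb, hbcd,
    countP_roots_cubic_of_eval_neg (by linarith) (by linarith) hd₁⟩
end

section
/- Let P(x) = x^3 - b x^2 + c x + d with b > 2, d > 0, and P(1) > 0. Then P has exactly one real root in (-∞, 0), and the other two roots (real or complex) lie outside the closed unit disk (modulus > 1, or real and > 1). -/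
/-!
The negative root `l` exists by the intermediate value theorem, since `P(0) = d > 0` and `P → -∞`.
Dividing it out leaves `P(x) = (x - l) Q(x)` with `Q(x) = x² + p x + q`, where `p = l - b < -2`
and `Q(1) = P(1) / (1 - l) > 0`. Such a `Q` has all its roots in the half-plane `Re z > 1`:
a real root `x ≤ 1` is impossible since `Q(x) - Q(1) = (x - 1)(x + 1 + p) ≥ 0` there, and a
non-real pair of roots has real part `-p / 2 > 1`.
-/

lemma exists_neg_root_of_cubic {b c d : ℝ} (hb : 0 ≤ b) (hd : 0 < d) :
    ∃ x < 0, x ^ 3 - b * x ^ 2 + c * x + d = 0 := by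
  set f : ℝ → ℝ := fun x => x ^ 3 - b * x ^ 2 + c * x + d
  -- at `x = -t` with `t = 1 + |c| + d`: `f x ≤ -t³ + (|c| + d) t = -t (t² - t + 1) < 0`
  set t := 1 + |c| + d
  have ht : 1 ≤ t := by linarith [abs_nonneg c]
  have hft : f (-t) < 0 := by
    have hc : c * -t ≤ |c| * t := by nlinarith [neg_abs_le c]
    simp only [f]
    nlinarith [mul_nonneg hb (sq_nonneg t)]
  obtain ⟨x, hx, hfx⟩ := intermediate_value_Icc (by linarith : -t ≤ 0)
    (by fun_prop : Continuous f).continuousOn ⟨hft.le, by simp [f, hd.le]⟩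
  refine ⟨x, lt_of_le_of_ne hx.2 ?_, hfx⟩
  rintro rfl
  simp [f] at hfx
  linarith

lemma cubic_eq_mul_quadratic {R : Type*} [CommRing R] {b c d l : R}
    (hl : l ^ 3 - b * l ^ 2 + c * l + d = 0) (x : R) :
    x ^ 3 - b * x ^ 2 + c * x + d = (x - l) * (x ^ 2 + (l - b) * x + (l ^ 2 - b * l + c)) := by
  linear_combination hl

lemma one_lt_of_quadratic_root {p q x : ℝ} (hp : p < -2) (h1 : 0 < 1 + p + q)
    (hx : x ^ 2 + p * x + q = 0) : 1 < x := by
  by_contra! h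
  nlinarith [mul_nonneg (sub_nonneg.2 h) (by linarith : (0 : ℝ) ≤ -(x + 1 + p))]

lemma one_lt_re_of_quadratic_root {p q : ℝ} {z : ℂ} (hp : p < -2) (h1 : 0 < 1 + p + q)
    (hz : z ^ 2 + p * z + q = 0) : 1 < z.re := by
  have hre : z.re ^ 2 - z.im ^ 2 + p * z.re + q = 0 := by
    simpa [pow_two] using congrArg Complex.re hz
  have him : z.im * (2 * z.re + p) = 0 := by
    have := congrArg Complex.im hz
    simp only [pow_two, Complex.add_im, Complex.mul_im, Complex.ofReal_re, Complex.ofReal_im,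
      Complex.zero_im] at this
    linear_combination this
  rcases mul_eq_zero.1 him with hy | hx
  · exact one_lt_of_quadratic_root hp h1 (by rw [hy] at hre; linear_combination hre)
  · linarith

theorem stmt_13 (b c d : ℝ) (hb : 2 < b) (hd : 0 < d)
    (h1 : 0 < (1 : ℝ) ^ 3 - b * 1 ^ 2 + c * 1 + d) :
    (∃! x : ℝ, x < 0 ∧ x ^ 3 - b * x ^ 2 + c * x + d = 0) ∧
    (∀ z : ℂ, z ^ 3 - (b : ℂ) * z ^ 2 + (c : ℂ) * z + (d : ℂ) = 0 →
      ¬(z.im = 0 ∧ z.re < 0) → 1 < ‖z‖) := by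
  obtain ⟨l, hl0, hl⟩ := exists_neg_root_of_cubic (c := c) (by linarith : 0 ≤ b) hd
  have hp : l - b < -2 := by linarith
  have hQ1 : 0 < 1 + (l - b) + (l ^ 2 - b * l + c) := by
    rw [cubic_eq_mul_quadratic hl, one_pow, mul_one] at h1
    exact pos_of_mul_pos_right h1 (by linarith)
  refine ⟨⟨l, ⟨hl0, hl⟩, fun y ⟨hy0, hy⟩ => ?_⟩, fun z hz hz0 => ?_⟩
  · rcases mul_eq_zero.1 ((cubic_eq_mul_quadratic hl y).symm.trans hy) with h | h
    · exact sub_eq_zero.1 h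
    · linarith [one_lt_of_quadratic_root hp hQ1 h]
  · have hlC : (l : ℂ) ^ 3 - b * (l : ℂ) ^ 2 + c * l + d = 0 := by exact_mod_cast hl
    rcases mul_eq_zero.1 ((cubic_eq_mul_quadratic hlC z).symm.trans hz) with h | h
    · exact absurd (by simp [sub_eq_zero.1 h, hl0]) hz0
    · have hre := one_lt_re_of_quadratic_root hp hQ1 (z := z) (by push_cast; exact h)
      exact hre.trans_le (Complex.re_le_norm z)
end

section
/- Let P(x) = x^3 - b x^2 + c x + d with b > 2, d > 0, P(-1) < 0 and P(1) > 0. Then P has exactly one root in the interval (-1, 0) and the other two roots lie outside the closed unit disk. -/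
/-!
By the intermediate value theorem `P` has a root `r ∈ (-1, 0)`, since `P(-1) < 0 < d = P(0)`.
Dividing out `X - r` leaves the monic real quadratic `Q = X² + (r - b) X + q` with
`q = r² - b r + c`. From `P(1) = (1 - r) Q(1) > 0` we get `Q(1) > 0`, i.e. `b - r < 1 + q`, and hence
`q > b - r - 1 > 1`. A monic real quadratic with constant term `q > 1` and linear coefficient of
absolute value `< 1 + q` has both roots outside the closed unit disk: non-real roots are conjugate
with `|z|² = q`, and a real root `x` would have its partner `q / x` on the same side of `0` with
`|x| + q / |x| = |p| < 1 + q`, which forces `|x| > 1`.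
-/

open Complex

lemma cubic_eq_mul_of_root {R : Type*} [CommRing R] {b c d r : R}
    (hr : r ^ 3 - b * r ^ 2 + c * r + d = 0) (x : R) :
    x ^ 3 - b * x ^ 2 + c * x + d = (x - r) * (x ^ 2 + (r - b) * x + (r ^ 2 - b * r + c)) := by
  linear_combination hr

lemma exists_cubic_root_mem_Ioo_neg_one_zero {b c d : ℝ} (hd : 0 < d)
    (hm1 : (-1 : ℝ) ^ 3 - b * (-1) ^ 2 + c * (-1) + d < 0) :
    ∃ r ∈ Set.Ioo (-1 : ℝ) 0, r ^ 3 - b * r ^ 2 + c * r + d = 0 :=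
  intermediate_value_Ioo (by norm_num) (by fun_prop) ⟨by simpa using hm1, by simpa using hd⟩

lemma one_lt_abs_of_quadratic_root {p q : ℝ} (hq : 1 < q) (hp : |p| < 1 + q) {x : ℝ}
    (hx : x ^ 2 + p * x + q = 0) : 1 < |x| := by
  rw [abs_lt] at hp
  by_contra! hx1
  rw [abs_le] at hx1
  rcases lt_trichotomy x 0 with hneg | hzero | hpos
  · nlinarith [mul_nonneg (by linarith : 0 ≤ 1 + x) (by linarith : 0 ≤ q + x),
      mul_pos (neg_pos.2 hneg) (by linarith : 0 < 1 + q - p)]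
  · subst hzero; linarith
  · nlinarith [mul_nonneg (by linarith : 0 ≤ 1 - x) (by linarith : 0 ≤ q - x),
      mul_pos hpos (by linarith : 0 < 1 + q + p)]

lemma one_lt_norm_of_quadratic_root {p q : ℝ} (hq : 1 < q) (hp : |p| < 1 + q) {z : ℂ}
    (hz : z ^ 2 + p * z + q = 0) : 1 < ‖z‖ := by
  have hre : z.re ^ 2 - z.im ^ 2 + p * z.re + q = 0 := by
    simpa [sq] using congrArg re hz
  have him : z.im * (2 * z.re + p) = 0 := by
    linear_combination (by simpa [sq] using congrArg im hz : _ = _)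
  rcases mul_eq_zero.1 him with hzero | hsum
  · have hreal : z = z.re := Complex.ext rfl (by simp [hzero])
    rw [hreal, norm_real, Real.norm_eq_abs]
    exact one_lt_abs_of_quadratic_root hq hp (by simpa [hzero] using hre)
  · have hnormSq : ‖z‖ ^ 2 = q := by
      rw [Complex.sq_norm, normSq_apply]
      linear_combination -hre + z.re * hsum
    nlinarith [norm_nonneg z]

theorem stmt_15 (b c d : ℝ) (hb : 2 < b) (hd : 0 < d)
    (hm1 : (-1 : ℝ) ^ 3 - b * (-1) ^ 2 + c * (-1) + d < 0)
    (h1 : 0 < (1 : ℝ) ^ 3 - b * 1 ^ 2 + c * 1 + d) :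
    (∃! x : ℝ, x ∈ Set.Ioo (-1 : ℝ) 0 ∧ x ^ 3 - b * x ^ 2 + c * x + d = 0) ∧
    (∀ z : ℂ, z ^ 3 - (b : ℂ) * z ^ 2 + (c : ℂ) * z + (d : ℂ) = 0 →
      ¬(z.im = 0 ∧ z.re ∈ Set.Ioo (-1 : ℝ) 0) → 1 < ‖z‖) := by
  obtain ⟨r, ⟨hr1, hr0⟩, hr⟩ := exists_cubic_root_mem_Ioo_neg_one_zero hd hm1
  have hQ1 : 0 < 1 + (r - b) + (r ^ 2 - b * r + c) := by
    nlinarith [cubic_eq_mul_of_root hr 1]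
  have hq : 1 < r ^ 2 - b * r + c := by linarith
  have hp : |r - b| < 1 + (r ^ 2 - b * r + c) := by
    rw [abs_of_neg (by linarith)]
    linarith
  refine ⟨⟨r, ⟨⟨hr1, hr0⟩, hr⟩, ?_⟩, ?_⟩
  · rintro x ⟨⟨hx1, hx0⟩, hx⟩
    rw [cubic_eq_mul_of_root hr] at hx
    rcases mul_eq_zero.1 hx with hxr | hQx
    · linarith
    · have habs := one_lt_abs_of_quadratic_root hq hp hQx
      rw [abs_of_neg hx0] at habs
      linarith
  · intro z hz hz_ne
    have hrC : (r : ℂ) ^ 3 - b * r ^ 2 + c * r + d = 0 := by exact_mod_cast hr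
    rw [cubic_eq_mul_of_root hrC] at hz
    rcases mul_eq_zero.1 hz with hzr | hQz
    · rw [sub_eq_zero.1 hzr] at hz_ne
      exact absurd ⟨ofReal_im r, by simpa using ⟨hr1, hr0⟩⟩ hz_ne
    · exact one_lt_norm_of_quadratic_root hq hp (by push_cast; exact hQz)
end
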